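/- Let (Ω, 𝔉, P) be a probability space, α ∈ (0,1), and let X be an integrable real-valued random variable. Set λ* := VaR_α(X) and assume P(X > λ*) = 1 − α. Let Ξ := {ξ : Ω → ℝ measurable : 0 ≤ ξ ≤ 1/(1−α) almost surely}, define the Lagrangian L(ξ, λ) := E[X ξ] − λ (E[ξ] − 1), and set ξ* := (1/(1−α)) 1{X > λ*}. Then (ξ*, λ*) is a saddle-point of L: for every ξ ∈ Ξ and every λ ∈ ℝ, L(ξ, λ*) ≤ L(ξ*, λ*) ≤ L(ξ*, λ), and moreover L(ξ*, λ*) = CVaR_α(X). -/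

import Mathlib

open MeasureTheory

/-- Value-at-risk at level `α` of the loss `X`: the `α`-quantile
`VaR_α(X) = inf {x : P(X ≤ x) ≥ α}`. -/
noncomputable def VaR {Ω : Type*} [MeasurableSpace Ω] (P : Measure Ω) (X : Ω → ℝ) (α : ℝ) : ℝ :=
  sInf {x : ℝ | α ≤ (P {ω | X ω ≤ x}).toReal}

/-- Conditional value-at-risk: `CVaR_α(X) = (1-α)⁻¹ ∫_α^1 VaR_u(X) du`. -/
noncomputable def CVaR {Ω : Type*} [MeasurableSpace Ω] (P : Measure Ω) (X : Ω → ℝ) (α : ℝ) : ℝ :=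
  (1 - α)⁻¹ * ∫ u in α..1, VaR P X u

/-- The Lagrangian `L(ξ, λ) = E[Xξ] − λ(E[ξ] − 1)`. -/
noncomputable def Lagr {Ω : Type*} [MeasurableSpace Ω] (P : Measure Ω) (X ξ : Ω → ℝ)
    (l : ℝ) : ℝ :=
  (∫ ω, X ω * ξ ω ∂P) - l * ((∫ ω, ξ ω ∂P) - 1)

/-- `ξ* = (1/(1−α)) 1{X > VaR_α(X)}`. -/
noncomputable def xiStar {Ω : Type*} [MeasurableSpace Ω] (P : Measure Ω) (X : Ω → ℝ)
    (α : ℝ) : Ω → ℝ :=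
  fun ω => if VaR P X α < X ω then (1 - α)⁻¹ else 0

/-! The quantile `u ↦ VaR_u(X)` is the lower Galois adjoint of the right-continuous cdf of `X`,
so on `(α, 1)` the function `u ↦ VaR_u(X) - λ*` has the same tail function as `(X - λ*)⁺`.
The layer-cake formula then gives `∫_α^1 VaR_u du = (1 - α) λ* + E[(X - λ*)⁺]`, that is,
`CVaR_α(X) = λ* + E[(X - λ*)⁺] / (1 - α)`. The mass condition makes `E[ξ*] = 1`, so
`L(ξ*, ·)` is constant with exactly this value, while for `0 ≤ ξ ≤ 1/(1 - α)` one has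
`L(ξ, λ*) = λ* + E[(X - λ*) ξ] ≤ λ* + E[(X - λ*)⁺] / (1 - α)` pointwise under the integral. -/

open ProbabilityTheory Set

namespace ProbabilityTheory

lemma csInf_le_iff_le_cdf (μ : Measure ℝ) [IsProbabilityMeasure μ] {u : ℝ} (hu : u ∈ Ioo 0 1)
    (x : ℝ) : sInf {y | u ≤ cdf μ y} ≤ x ↔ u ≤ cdf μ x := by
  set S := {y | u ≤ cdf μ y}
  have hne : S.Nonempty := ((tendsto_cdf_atTop μ).eventually (eventually_ge_nhds hu.2)).exists
  have hbdd : BddBelow S := by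
    obtain ⟨z, hz⟩ := ((tendsto_cdf_atBot μ).eventually (eventually_lt_nhds hu.1)).exists
    exact ⟨z, fun y hy => le_of_not_gt fun hyz => (hy.trans ((cdf μ).mono hyz.le)).not_gt hz⟩
  -- right-continuity of the cdf makes the infimum attained
  have hmem : u ≤ cdf μ (sInf S) := by
    refine ge_of_tendsto ((cdf μ).right_continuous _ |>.mono Ioi_subset_Ici_self).tendsto ?_
    filter_upwards [self_mem_nhdsWithin] with z hz
    obtain ⟨y, hyS, hyz⟩ := exists_lt_of_csInf_lt hne hz
    exact hyS.trans ((cdf μ).mono hyz.le)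
  exact ⟨fun h => hmem.trans ((cdf μ).mono h), fun h => csInf_le hbdd h⟩

end ProbabilityTheory

section Quantile

variable {Ω : Type*} [MeasurableSpace Ω] {P : Measure Ω} [IsProbabilityMeasure P] {X : Ω → ℝ}

lemma toReal_measure_le_eq_cdf_map (hX : AEMeasurable X P) (x : ℝ) :
    (P {ω | X ω ≤ x}).toReal = cdf (P.map X) x := by
  have := Measure.isProbabilityMeasure_map hX
  rw [cdf_eq_real, measureReal_def, Measure.map_apply_of_aemeasurable hX measurableSet_Iic]
  rfl

lemma VaR_eq_csInf_cdf (hX : AEMeasurable X P) (u : ℝ) :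
    VaR P X u = sInf {x | u ≤ cdf (P.map X) x} := by
  simp only [VaR, toReal_measure_le_eq_cdf_map hX]

lemma VaR_le_iff (hX : AEMeasurable X P) {u : ℝ} (hu : u ∈ Ioo 0 1) (x : ℝ) :
    VaR P X u ≤ x ↔ u ≤ cdf (P.map X) x := by
  have := Measure.isProbabilityMeasure_map hX
  rw [VaR_eq_csInf_cdf hX, csInf_le_iff_le_cdf _ hu]

lemma lt_VaR_iff (hX : AEMeasurable X P) {u : ℝ} (hu : u ∈ Ioo 0 1) (x : ℝ) :
    x < VaR P X u ↔ cdf (P.map X) x < u := by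
  simpa only [not_le] using (VaR_le_iff hX hu x).not

lemma monotoneOn_VaR (hX : AEMeasurable X P) : MonotoneOn (VaR P X) (Ioo 0 1) :=
  fun _ hu _ hv huv => (VaR_le_iff hX hu _).2 <| huv.trans <| (VaR_le_iff hX hv _).1 le_rfl

lemma measure_VaR_sub_VaR_gt (hX : AEMeasurable X P) {α : ℝ} (hα : α ∈ Ioo 0 1) {t : ℝ}
    (ht : 0 < t) :
    volume.restrict (Ioo α 1) {u | t < VaR P X u - VaR P X α} =
      P {ω | t < X ω - VaR P X α} := by
  set c := VaR P X α + t
  have hαc : α ≤ cdf (P.map X) c := (VaR_le_iff hX hα c).1 (by linarith)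
  have hslice : {u | t < VaR P X u - VaR P X α} ∩ Ioo α 1 = Ioo (cdf (P.map X) c) 1 := by
    ext u
    simp only [mem_inter_iff, mem_ofPred_eq, mem_Ioo, lt_sub_iff_add_lt']
    constructor
    · rintro ⟨hcu, hαu, hu1⟩
      exact ⟨(lt_VaR_iff hX ⟨hα.1.trans hαu, hu1⟩ c).1 hcu, hu1⟩
    · rintro ⟨hcu, hu1⟩
      have hu : u ∈ Ioo 0 1 := ⟨(hα.1.trans_le hαc).trans hcu, hu1⟩
      exact ⟨(lt_VaR_iff hX hu c).2 hcu, hαc.trans_lt hcu, hu1⟩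
  have htail : P {ω | t < X ω - VaR P X α} = ENNReal.ofReal (1 - cdf (P.map X) c) := by
    have := Measure.isProbabilityMeasure_map hX
    simp only [lt_sub_iff_add_lt']
    rw [← (cdf (P.map X)).measure_Ioi (tendsto_cdf_atTop _), measure_cdf,
      Measure.map_apply_of_aemeasurable hX measurableSet_Ioi]
    rfl
  rw [Measure.restrict_apply' measurableSet_Ioo, hslice, Real.volume_Ioo, htail]

lemma integral_VaR_eq (hX : Integrable X P) {α : ℝ} (hα : α ∈ Ioo 0 1) :
    ∫ u in α..1, VaR P X u = (1 - α) * VaR P X α + ∫ ω, max (X ω - VaR P X α) 0 ∂P := by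
  set c := VaR P X α
  set ν := volume.restrict (Ioo α 1)
  have hmono : MonotoneOn (VaR P X) (Ioo α 1) :=
    (monotoneOn_VaR hX.aemeasurable).mono (Ioo_subset_Ioo_left hα.1.le)
  have hg_nn : 0 ≤ᵐ[ν] fun u => VaR P X u - c :=
    (ae_restrict_iff' measurableSet_Ioo).2 <| .of_forall fun u hu => sub_nonneg.2 <|
      monotoneOn_VaR hX.aemeasurable hα ⟨hα.1.trans hu.1, hu.2⟩ hu.1.le
  have hg_meas : AEMeasurable (fun u => VaR P X u - c) ν :=
    (aemeasurable_restrict_of_monotoneOn measurableSet_Ioo hmono).sub_const c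
  have hY_nn : 0 ≤ᵐ[P] fun ω => max (X ω - c) 0 := .of_forall fun _ => le_max_right _ _
  have hY : Integrable (fun ω => max (X ω - c) 0) P := (hX.sub (integrable_const c)).pos_part
  -- layer cake: both sides have the same tail function
  have hlin : ∫⁻ u, ENNReal.ofReal (VaR P X u - c) ∂ν =
      ∫⁻ ω, ENNReal.ofReal (max (X ω - c) 0) ∂P := by
    rw [lintegral_eq_lintegral_meas_lt ν hg_nn hg_meas,
      lintegral_eq_lintegral_meas_lt P hY_nn hY.aemeasurable]
    refine setLIntegral_congr_fun measurableSet_Ioi fun t ht => ?_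
    simp only [lt_max_iff, (mem_Ioi.1 ht).not_gt, or_false]
    exact measure_VaR_sub_VaR_gt hX.aemeasurable hα ht
  have hg : Integrable (fun u => VaR P X u - c) ν := by
    refine ⟨hg_meas.aestronglyMeasurable, ?_⟩
    rw [hasFiniteIntegral_iff_ofReal hg_nn, hlin]
    exact (hasFiniteIntegral_iff_ofReal hY_nn).1 hY.2
  have hint : ∫ u, (VaR P X u - c) ∂ν = ∫ ω, max (X ω - c) 0 ∂P := by
    rw [integral_eq_lintegral_of_nonneg_ae hg_nn hg_meas.aestronglyMeasurable,
      integral_eq_lintegral_of_nonneg_ae hY_nn hY.aestronglyMeasurable, hlin]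
  calc ∫ u in α..1, VaR P X u = ∫ u, ((VaR P X u - c) + c) ∂ν := by
        simp only [intervalIntegral.integral_of_le hα.2.le, integral_Ioc_eq_integral_Ioo,
          sub_add_cancel, ν]
    _ = (1 - α) * c + ∫ ω, max (X ω - c) 0 ∂P := by
        rw [integral_add hg (integrable_const c), hint, integral_const, smul_eq_mul,
          measureReal_restrict_apply_univ, Real.volume_real_Ioo_of_le hα.2.le]
        ring

lemma CVaR_eq_VaR_add (hX : Integrable X P) {α : ℝ} (hα : α ∈ Ioo 0 1) :
    CVaR P X α = VaR P X α + (1 - α)⁻¹ * ∫ ω, max (X ω - VaR P X α) 0 ∂P := by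
  have : 1 - α ≠ 0 := sub_ne_zero.2 hα.2.ne'
  rw [CVaR, integral_VaR_eq hX hα]
  field_simp

end Quantile

section Lagrangian

variable {Ω : Type*} [MeasurableSpace Ω] {P : Measure Ω} {X ξ : Ω → ℝ}

lemma Lagr_le_of_ae_mem_Icc [IsFiniteMeasure P] (hX : Integrable X P)
    (hξ : AEStronglyMeasurable ξ P) {c : ℝ} (hb : ∀ᵐ ω ∂P, 0 ≤ ξ ω ∧ ξ ω ≤ c) (l : ℝ) :
    Lagr P X ξ l ≤ l + c * ∫ ω, max (X ω - l) 0 ∂P := by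
  have hbound : ∀ᵐ ω ∂P, ‖ξ ω‖ ≤ c := hb.mono fun ω h => by
    rw [Real.norm_of_nonneg h.1]; exact h.2
  have hξi : Integrable ξ P := .of_bound hξ c hbound
  have hXl : Integrable (fun ω => X ω - l) P := hX.sub (integrable_const l)
  have hpt : ∀ᵐ ω ∂P, (X ω - l) * ξ ω ≤ c * max (X ω - l) 0 := hb.mono fun ω h =>
    calc (X ω - l) * ξ ω ≤ max (X ω - l) 0 * ξ ω :=
          mul_le_mul_of_nonneg_right (le_max_left _ _) h.1
      _ ≤ c * max (X ω - l) 0 := by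
          rw [mul_comm]; exact mul_le_mul_of_nonneg_right h.2 (le_max_right _ _)
  calc Lagr P X ξ l = l + ∫ ω, (X ω - l) * ξ ω ∂P := by
        simp only [Lagr, sub_mul, integral_sub (hX.mul_bdd hξ hbound) (hξi.const_mul l),
          integral_const_mul]
        ring
    _ ≤ l + ∫ ω, c * max (X ω - l) 0 ∂P := by
        linarith [integral_mono_ae (hXl.mul_bdd hξ hbound) (hXl.pos_part.const_mul c) hpt]
    _ = l + c * ∫ ω, max (X ω - l) 0 ∂P := by rw [integral_const_mul]

end Lagrangian

section XiStar

variable {Ω : Type*} [MeasurableSpace Ω] {P : Measure Ω} {X : Ω → ℝ} {α : ℝ}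

lemma xiStar_eq_indicator :
    xiStar P X α = {ω | VaR P X α < X ω}.indicator fun _ => (1 - α)⁻¹ := by
  ext ω
  simp [xiStar, indicator_apply]

lemma integral_xiStar (hX : AEMeasurable X P) (hα : α < 1)
    (hmass : (P {ω | VaR P X α < X ω}).toReal = 1 - α) :
    ∫ ω, xiStar P X α ω ∂P = 1 := by
  rw [xiStar_eq_indicator, integral_indicator₀ (nullMeasurableSet_lt aemeasurable_const hX),
    setIntegral_const, smul_eq_mul, measureReal_def, hmass,
    mul_inv_cancel₀ (sub_ne_zero.2 hα.ne')]

lemma Lagr_xiStar [IsFiniteMeasure P] (hX : Integrable X P) (hα : α < 1)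
    (hmass : (P {ω | VaR P X α < X ω}).toReal = 1 - α) (l : ℝ) :
    Lagr P X (xiStar P X α) l = VaR P X α + (1 - α)⁻¹ * ∫ ω, max (X ω - VaR P X α) 0 ∂P := by
  set v := VaR P X α
  have hξi : Integrable (xiStar P X α) P := by
    rw [xiStar_eq_indicator]
    exact (integrable_const _).indicator₀
      (nullMeasurableSet_lt aemeasurable_const hX.aemeasurable)
  have hY : Integrable (fun ω => max (X ω - v) 0) P := (hX.sub (integrable_const v)).pos_part
  have hpt : ∀ ω, X ω * xiStar P X α ω = (1 - α)⁻¹ * max (X ω - v) 0 + v * xiStar P X α ω := by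
    intro ω
    by_cases h : v < X ω
    · simp only [xiStar, h, if_true, max_eq_left (sub_nonneg.2 h.le), v]
      ring
    · simp only [xiStar, h, if_false, max_eq_right (sub_nonpos.2 (not_lt.1 h)), v]
      ring
  have hone := integral_xiStar hX.aemeasurable hα hmass
  rw [Lagr, hone, sub_self, mul_zero, sub_zero, integral_congr_ae (.of_forall hpt),
    integral_add (hY.const_mul _) (hξi.const_mul v), integral_const_mul, integral_const_mul, hone]
  ring

end XiStar

theorem cvar_saddle_point_general {Ω : Type*} [MeasurableSpace Ω] (P : Measure Ω)
    [IsProbabilityMeasure P] (α : ℝ) (hα : α ∈ Set.Ioo (0:ℝ) 1)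
    (X : Ω → ℝ) (hX : Integrable X P)
    (hmass : (P {ω | VaR P X α < X ω}).toReal = 1 - α) :
    (∀ ξ : Ω → ℝ, Measurable ξ → (∀ᵐ ω ∂P, 0 ≤ ξ ω ∧ ξ ω ≤ (1 - α)⁻¹) →
      Lagr P X ξ (VaR P X α) ≤ Lagr P X (xiStar P X α) (VaR P X α)) ∧
    (∀ l : ℝ, Lagr P X (xiStar P X α) (VaR P X α) ≤ Lagr P X (xiStar P X α) l) ∧
    Lagr P X (xiStar P X α) (VaR P X α) = CVaR P X α := by
  have hval : ∀ l, Lagr P X (xiStar P X α) l = CVaR P X α := fun l => by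
    rw [Lagr_xiStar hX hα.2 hmass, CVaR_eq_VaR_add hX hα]
  refine ⟨fun ξ hξ hb => ?_, fun l => by rw [hval, hval], hval _⟩
  rw [hval, CVaR_eq_VaR_add hX hα]
  exact Lagr_le_of_ae_mem_Icc hX hξ.aestronglyMeasurable hb _

/-- `(ξ*, λ*)` with `λ* = VaR_α(X)` and `ξ* = (1/(1−α)) 1{X > λ*}` is a saddle-point of
the Lagrangian over `Ξ = {ξ : 0 ≤ ξ ≤ 1/(1−α) a.s.}`, and its value is `CVaR_α(X)`. -/
theorem cvar_saddle_point {Ω : Type*} [MeasurableSpace Ω] (P : Measure Ω)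
    [IsProbabilityMeasure P] (α : ℝ) (hα : α ∈ Set.Ioo (0:ℝ) 1)
    (X : Ω → ℝ) (hXm : Measurable X) (hX : Integrable X P)
    (hmass : (P {ω | VaR P X α < X ω}).toReal = 1 - α) :
    (∀ ξ : Ω → ℝ, Measurable ξ → (∀ᵐ ω ∂P, 0 ≤ ξ ω ∧ ξ ω ≤ (1 - α)⁻¹) →
      Lagr P X ξ (VaR P X α) ≤ Lagr P X (xiStar P X α) (VaR P X α)) ∧
    (∀ l : ℝ, Lagr P X (xiStar P X α) (VaR P X α) ≤ Lagr P X (xiStar P X α) l) ∧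
    Lagr P X (xiStar P X α) (VaR P X α) = CVaR P X α :=
  cvar_saddle_point_general P α hα X hX hmass
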